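/- arXiv:1507.01580 — 4 statements merged into one kernel-verified Lean document; each statement's English description precedes it below -/
import Mathlib

section
/- With the change of variables θ = 2λπ^{rr}, θ_ϕ = 2γπ^{rϕ} + 2λ_ϕπ^{rr}, σ = π^{ϕϕ} + 2λᶲπ^{rϕ} + (λᶲ)²π^{rr}, and the metric variables λ = 1/√(g^{rr}), λ_ϕ = g_{rϕ}, γ = g_{ϕϕ}, the pairing identity π^{ij}δg_{ij} = θ δλ + θ_ϕ δλᶲ + σ δγ holds, where π^{ij}δg_{ij} = π^{rr}δg_{rr} + 2π^{rϕ}δg_{rϕ} + π^{ϕϕ}δg_{ϕϕ}. -/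
theorem stmt3_general (lam lamphi gam : ℝ) (hgam : 0 < gam)
    (prr prph pphph : ℝ) (dlam dlamphi dgam : ℝ) :
    let lamup : ℝ := lamphi / gam
    let dlamup : ℝ := dlamphi / gam - lamphi * dgam / gam ^ 2
    let dgrr : ℝ := 2 * lam * dlam + dlamup * lamphi + lamup * dlamphi
    let dgrph : ℝ := dlamphi
    let dgphph : ℝ := dgam
    let θ : ℝ := 2 * lam * prr
    let θφ : ℝ := 2 * gam * prph + 2 * lamphi * prr
    let σ : ℝ := pphph + 2 * lamup * prph + lamup ^ 2 * prr
    prr * dgrr + 2 * prph * dgrph + pphph * dgphph = θ * dlam + θφ * dlamup + σ * dgam := by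
  intro lamup dlamup dgrr dgrph dgphph θ θφ σ
  have hgam_ne : gam ≠ 0 := hgam.ne'
  simp only [lamup, dlamup, dgrr, dgrph, dgphph, θ, θφ, σ]
  field_simp
  ring

/-- The pairing identity `π^{ij}δg_{ij} = θ δλ + θ_ϕ δλᶲ + σ δγ` for the radial
decomposition variables `θ = 2λπ^{rr}`, `θ_ϕ = 2γπ^{rϕ} + 2λ_ϕπ^{rr}`,
`σ = π^{ϕϕ} + 2λᶲπ^{rϕ} + (λᶲ)²π^{rr}`, where `g_{rr} = λ² + λᶲλ_ϕ`, `g_{rϕ} = λ_ϕ`,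
`g_{ϕϕ} = γ`, `λᶲ = λ_ϕ/γ`, and `δ` is a first-order variation in an arbitrary
direction `(δλ, δλ_ϕ, δγ)` with `δλᶲ` given by the chain rule. -/
theorem stmt3 (lam lamphi gam : ℝ) (hlam : 0 < lam) (hgam : 0 < gam)
    (prr prph pphph : ℝ) (dlam dlamphi dgam : ℝ) :
    let lamup : ℝ := lamphi / gam
    let dlamup : ℝ := dlamphi / gam - lamphi * dgam / gam ^ 2
    let dgrr : ℝ := 2 * lam * dlam + dlamup * lamphi + lamup * dlamphi
    let dgrph : ℝ := dlamphi
    let dgphph : ℝ := dgam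
    let θ : ℝ := 2 * lam * prr
    let θφ : ℝ := 2 * gam * prph + 2 * lamphi * prr
    let σ : ℝ := pphph + 2 * lamup * prph + lamup ^ 2 * prr
    prr * dgrr + 2 * prph * dgrph + pphph * dgphph = θ * dlam + θφ * dlamup + σ * dgam :=
  stmt3_general lam lamphi gam hgam prr prph pphph dlam dlamphi dgam
end

section
/- Suppose the modes satisfy i{Lₘ,Lₙ} = (m−n)L_{m+n}, i{Lₘ,Tᵃₙ} = −nTᵃ_{m+n}, i{Tᵃₘ,Tᵇₙ} = i f^{ab}_c T^c_{m+n} + (l/(8G))η^{ab}mδ_{m+n,0} (sl(2,ℝ) current algebra with f and η as above, central terms suppressed on Virasoro), and let H = (1/l)(L₀ + ½T⁺₀ − 2Δ T⁻₀) with Δ = −α², α > 0. Then the time-dependent combinations T̃⁰ₘ(t) = e^{imt/l}[T⁰ₘcos(2αt/l) + (1/(4α))T⁺ₘsin(2αt/l) − αT⁻ₘsin(2αt/l)] satisfy the conservation equation d/dt T̃⁰ₘ(t) + {T̃⁰ₘ(t), H} = 0, where d/dt acts only on the explicit time dependence. -/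
open Complex

/-!
With `Δ = -α²` the Hamiltonian splits as `l⁻¹ L₀ + K`, `K = l⁻¹ (½ T⁺₀ + 2α² T⁻₀)`.
Bracketing with `l⁻¹ L₀` multiplies every mode-`m` current by `-i m / l`, which the phase
`e^{i m t / l}` compensates. Bracketing with `K` sends `T⁰ₘ ↦ -ω Qₘ` and `Qₘ ↦ ω T⁰ₘ`, where
`ω = 2α / l` and `Qₘ = T⁺ₘ / (4α) - α T⁻ₘ`, so `cos (ω t) T⁰ₘ + sin (ω t) Qₘ` is an orbit of the
rotation generated by `-ad K`. The central term of `{T⁺ₘ, T⁻ₙ}` is proportional to `m δ_{m+n,0}`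
and therefore vanishes against the zero modes in `K`.
-/

theorem hasDerivAt_cos_smul_add_sin_smul {E : Type*} [NormedAddCommGroup E] [NormedSpace ℝ E]
    (D : E →ₗ[ℝ] E) {ω : ℝ} {u v : E} (hu : D u = -(ω • v)) (hv : D v = ω • u) (t : ℝ) :
    HasDerivAt (fun s : ℝ => Real.cos (ω * s) • u + Real.sin (ω * s) • v)
      (-D (Real.cos (ω * t) • u + Real.sin (ω * t) • v)) t := by
  have hθ : HasDerivAt (fun s : ℝ => ω * s) ω t := by simpa using (hasDerivAt_id t).const_mul ω
  refine ((hθ.cos.smul_const u).add (hθ.sin.smul_const v)).congr_deriv ?_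
  simp only [map_add, map_smul, hu, hv]
  module

theorem hasDerivAt_cexp_mul_smul {A : Type*} [NormedAddCommGroup A] [NormedSpace ℂ A]
    {D₀ D₁ : A →ₗ[ℂ] A} {X : ℝ → A} {μ : ℂ} {t : ℝ}
    (hX : HasDerivAt X (-D₁ (X t)) t) (hD₀ : D₀ (X t) = -(μ • X t)) :
    HasDerivAt (fun s : ℝ => cexp (μ * s) • X s) (-(D₀ + D₁) (cexp (μ * t) • X t)) t := by
  have he : HasDerivAt (fun s : ℂ => cexp (μ * s)) (cexp (μ * t) * μ) t := by
    simpa using ((hasDerivAt_id (t : ℂ)).const_mul μ).cexp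
  refine (he.comp_ofReal.smul hX).congr_deriv ?_
  simp only [LinearMap.add_apply, map_smul, hD₀]
  module

section CurrentAlgebra

variable {A : Type*} [AddCommGroup A] [Module ℂ A] {br : A →ₗ[ℂ] A →ₗ[ℂ] A} {T : Fin 3 → ℤ → A}
  {l α : ℝ}

theorem br_T_L_zero {L : ℤ → A}
    (hTL : ∀ (a : Fin 3) (m n : ℤ), br (T a m) (L n) = (-(I * (m : ℂ))) • T a (m + n))
    (a : Fin 3) (m : ℤ) :
    br (T a m) (L 0) = -(I * m) • T a m := by
  rw [hTL, add_zero]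

theorem br_T_one_T_two_zero {one : A} {κ : ℂ}
    (hT12 : ∀ m n : ℤ, br (T 1 m) (T 2 n) = (2 : ℂ) • T 0 (m + n)
      + (if m + n = 0 then -(κ * (m : ℂ)) else 0) • one) (m : ℤ) :
    br (T 1 m) (T 2 0) = (2 : ℂ) • T 0 m := by
  rw [hT12, add_zero]
  split_ifs with hm <;> simp [hm]

theorem br_T_two_T_one_zero {one : A} {κ : ℂ} (hanti : ∀ x y, br x y = -br y x)
    (hT12 : ∀ m n : ℤ, br (T 1 m) (T 2 n) = (2 : ℂ) • T 0 (m + n)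
      + (if m + n = 0 then -(κ * (m : ℂ)) else 0) • one) (m : ℤ) :
    br (T 2 m) (T 1 0) = (-2 : ℂ) • T 0 m := by
  rw [hanti, hT12, zero_add]
  simp

variable (T l α) in
noncomputable def currentPart : A := (l : ℂ)⁻¹ • ((1 / 2 : ℂ) • T 1 0 + (2 * (α : ℂ) ^ 2) • T 2 0)

variable (T α) in
noncomputable def quadratureMode (m : ℤ) : A := (1 / (4 * α)) • T 1 m - α • T 2 m

theorem br_quadratureMode_L_zero {L : ℤ → A}
    (hTL : ∀ (a : Fin 3) (m n : ℤ), br (T a m) (L n) = (-(I * (m : ℂ))) • T a (m + n)) (m : ℤ) :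
    br (quadratureMode T α m) (L 0) = -(I * m) • quadratureMode T α m := by
  simp only [quadratureMode, map_sub, LinearMap.map_smul_of_tower, LinearMap.sub_apply,
    LinearMap.smul_apply, br_T_L_zero hTL]
  module

theorem br_T_zero_currentPart (hα : α ≠ 0)
    (hT01 : ∀ m n : ℤ, br (T 0 m) (T 1 n) = -T 1 (m + n))
    (hT02 : ∀ m n : ℤ, br (T 0 m) (T 2 n) = T 2 (m + n)) (m : ℤ) :
    br (T 0 m) (currentPart T l α) = -((2 * α / l) • quadratureMode T α m) := by
  have hαC : (α : ℂ) ≠ 0 := mod_cast hα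
  simp only [currentPart, quadratureMode, map_smul, map_add, hT01, hT02, add_zero,
    ← Complex.coe_smul]
  push_cast
  match_scalars <;> field_simp
  ring

theorem br_quadratureMode_currentPart {one : A} {κ : ℂ} (hanti : ∀ x y, br x y = -br y x)
    (hT12 : ∀ m n : ℤ, br (T 1 m) (T 2 n) = (2 : ℂ) • T 0 (m + n)
      + (if m + n = 0 then -(κ * (m : ℂ)) else 0) • one)
    (hT11 : ∀ m n : ℤ, br (T 1 m) (T 1 n) = 0)
    (hT22 : ∀ m n : ℤ, br (T 2 m) (T 2 n) = 0) (m : ℤ) :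
    br (quadratureMode T α m) (currentPart T l α) = (2 * α / l) • T 0 m := by
  simp only [currentPart, quadratureMode, map_smul, map_add, map_sub, LinearMap.sub_apply,
    LinearMap.smul_apply, hT11, hT22, br_T_one_T_two_zero hT12, br_T_two_T_one_zero hanti hT12,
    ← Complex.coe_smul]
  push_cast
  match_scalars
  field_simp
  ring

end CurrentAlgebra

theorem stmt8_general (A : Type*) [NormedAddCommGroup A] [NormedSpace ℂ A]
    (br : A →ₗ[ℂ] A →ₗ[ℂ] A) (l G α Δ : ℝ) (hα : 0 < α)
    (hΔ : Δ = -α ^ 2)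
    (L : ℤ → A) (T : Fin 3 → ℤ → A) (one : A)
    (hanti : ∀ x y, br x y = -br y x)
    (hTL : ∀ (a : Fin 3) (m n : ℤ), br (T a m) (L n) = (-(Complex.I * (m : ℂ))) • T a (m + n))
    (hT01 : ∀ m n : ℤ, br (T 0 m) (T 1 n) = -T 1 (m + n))
    (hT02 : ∀ m n : ℤ, br (T 0 m) (T 2 n) = T 2 (m + n))
    (hT12 : ∀ m n : ℤ, br (T 1 m) (T 2 n) = (2 : ℂ) • T 0 (m + n)
      + (if m + n = 0 then -(Complex.I * ((l : ℂ) / (4 * (G : ℂ))) * (m : ℂ)) else 0) • one)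
    (hT11 : ∀ m n : ℤ, br (T 1 m) (T 1 n) = 0)
    (hT22 : ∀ m n : ℤ, br (T 2 m) (T 2 n) = 0) :
    let H : A := ((l : ℂ)⁻¹) • (L 0 + (1 / 2 : ℂ) • T 1 0 - (2 * (Δ : ℂ)) • T 2 0)
    let Tt : ℤ → ℝ → A := fun m t =>
      Complex.exp (Complex.I * (m : ℂ) * (t : ℂ) / (l : ℂ)) •
        (((Real.cos (2 * α * t / l) : ℝ) : ℂ) • T 0 m
          + (((1 / (4 * α)) * Real.sin (2 * α * t / l) : ℝ) : ℂ) • T 1 m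
          - ((α * Real.sin (2 * α * t / l) : ℝ) : ℂ) • T 2 m)
    ∀ (m : ℤ) (t : ℝ), HasDerivAt (Tt m) (-(br (Tt m t) H)) t := by
  intro H Tt m t
  set X : ℝ → A := fun s =>
    Real.cos (2 * α / l * s) • T 0 m + Real.sin (2 * α / l * s) • quadratureMode T α m
  have hTt : Tt m = fun s : ℝ => cexp (I * m / l * s) • X s := by
    funext s
    simp only [Tt, X, quadratureMode, mul_div_right_comm, ← Complex.coe_smul]
    push_cast
    module
  have hH : H = (l : ℂ)⁻¹ • L 0 + currentPart T l α := by
    simp only [H, currentPart, hΔ]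
    push_cast
    module
  have hX : HasDerivAt X (-br.flip (currentPart T l α) (X t)) t :=
    hasDerivAt_cos_smul_add_sin_smul ((br.flip _).restrictScalars ℝ)
      (br_T_zero_currentPart hα.ne' hT01 hT02 m)
      (br_quadratureMode_currentPart hanti hT12 hT11 hT22 m) t
  have hL : br.flip ((l : ℂ)⁻¹ • L 0) (X t) = -((I * m / l) • X t) := by
    simp only [LinearMap.flip_apply, X, map_add, LinearMap.map_smul_of_tower,
      LinearMap.smul_apply, br_T_L_zero hTL, br_quadratureMode_L_zero hTL]
    module
  rw [hTt]
  refine (hasDerivAt_cexp_mul_smul hX hL).congr_deriv ?_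
  rw [hH, map_add]
  rfl

/-- In a Poisson algebra whose modes satisfy `i{Lₘ,Lₙ} = (m−n)L_{m+n}`,
`i{Lₘ,Tᵃₙ} = −nTᵃ_{m+n}`, `i{Tᵃₘ,Tᵇₙ} = i f^{ab}_c T^c_{m+n} + (l/(8G))η^{ab}mδ_{m+n,0}`
(the `sl(2,ℝ)` current algebra, with `f⁰⁺₊ = −1`, `f⁰⁻₋ = 1`, `f⁺⁻₀ = 2`, `η⁰⁰ = −1`,
`η⁺⁻ = 2`, indices `0,+,− = 0,1,2`, central terms represented by the element `one`),
with Hamiltonian `H = (1/l)(L₀ + ½T⁺₀ − 2Δ T⁻₀)`, `Δ = −α²`, `α > 0`, the combinations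
`T̃⁰ₘ(t) = e^{imt/l}[T⁰ₘ cos(2αt/l) + (1/(4α))T⁺ₘ sin(2αt/l) − αT⁻ₘ sin(2αt/l)]`
satisfy `d/dt T̃⁰ₘ(t) + {T̃⁰ₘ(t), H} = 0`. -/
theorem stmt8 (A : Type*) [NormedAddCommGroup A] [NormedSpace ℂ A]
    (br : A →ₗ[ℂ] A →ₗ[ℂ] A) (l G α Δ : ℝ) (hl : 0 < l) (hG : 0 < G) (hα : 0 < α)
    (hΔ : Δ = -α ^ 2)
    (L : ℤ → A) (T : Fin 3 → ℤ → A) (one : A)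
    (hanti : ∀ x y, br x y = -br y x)
    (hone : ∀ x, br x one = 0)
    (hTL : ∀ (a : Fin 3) (m n : ℤ), br (T a m) (L n) = (-(Complex.I * (m : ℂ))) • T a (m + n))
    (hT00 : ∀ m n : ℤ, br (T 0 m) (T 0 n) =
      (if m + n = 0 then Complex.I * ((l : ℂ) / (8 * (G : ℂ))) * (m : ℂ) else 0) • one)
    (hT01 : ∀ m n : ℤ, br (T 0 m) (T 1 n) = -T 1 (m + n))
    (hT02 : ∀ m n : ℤ, br (T 0 m) (T 2 n) = T 2 (m + n))
    (hT12 : ∀ m n : ℤ, br (T 1 m) (T 2 n) = (2 : ℂ) • T 0 (m + n)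
      + (if m + n = 0 then -(Complex.I * ((l : ℂ) / (4 * (G : ℂ))) * (m : ℂ)) else 0) • one)
    (hT11 : ∀ m n : ℤ, br (T 1 m) (T 1 n) = 0)
    (hT22 : ∀ m n : ℤ, br (T 2 m) (T 2 n) = 0) :
    let H : A := ((l : ℂ)⁻¹) • (L 0 + (1 / 2 : ℂ) • T 1 0 - (2 * (Δ : ℂ)) • T 2 0)
    let Tt : ℤ → ℝ → A := fun m t =>
      Complex.exp (Complex.I * (m : ℂ) * (t : ℂ) / (l : ℂ)) •
        (((Real.cos (2 * α * t / l) : ℝ) : ℂ) • T 0 m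
          + (((1 / (4 * α)) * Real.sin (2 * α * t / l) : ℝ) : ℂ) • T 1 m
          - ((α * Real.sin (2 * α * t / l) : ℝ) : ℂ) • T 2 m)
    ∀ (m : ℤ) (t : ℝ), HasDerivAt (Tt m) (-(br (Tt m t) H)) t :=
  stmt8_general A br l G α Δ hα hΔ L T one hanti hTL hT01 hT02 hT12 hT11 hT22
end

section
/- In a Poisson algebra of ℤ-indexed modes with i{T⁰ₘ,T⁺ₙ} = −i T⁺_{m+n}, i{T⁰ₘ,T⁻ₙ} = i T⁻_{m+n}, i{T⁺ₘ,T⁻ₙ} = 2i T⁰_{m+n} + (l/(4G))mδ_{m+n,0}, i{T⁰ₘ,T⁰ₙ} = −(l/(8G))mδ_{m+n,0}, and Hamiltonian lH = L₀ + ½T⁺₀ − 2ΔT⁻₀ with i{Lₘ,Tᵃₙ} = −nTᵃ_{m+n}: the bracket of the primary constraint T⁰ₘ with lH equals −imT⁰ₘ − ½T⁺ₘ − 2ΔT⁻ₘ, so that on T⁰ ≈ 0 the secondary constraint is K⁺ₘ := ½T⁺ₘ + 2ΔT⁻ₘ ≈ 0; moreover {K⁺ₘ, lH} = −imK⁺ₘ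 − 4ΔT⁰ₘ, which vanishes on the constraint surface, so the constraint set {T⁰ₘ, K⁺ₘ} is complete. -/
/-!
Both brackets are computed by bilinearity from the mode algebra. Only `{T⁺, T⁻}` carries a
central term, and in `{K⁺ₘ, lH}` it only appears paired with a zero mode, where its factor
`m δ_{m+n,0}` vanishes; the two cross terms `{T⁺ₘ, T⁻₀}` and `{T⁻ₘ, T⁺₀}` then add up to
`−4ΔT⁰ₘ`.
-/

open Complex Submodule

lemma ite_add_eq_zero_neg_mul_eq_zero (c : ℂ) {m n : ℤ} (h : m = 0 ∨ n = 0) :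
    (if m + n = 0 then -(c * (m : ℂ)) else 0) = 0 := by
  split_ifs with hmn
  · obtain rfl : m = 0 := by omega
    simp
  · rfl

section ConstraintAlgebra

variable {A : Type*} [AddCommGroup A] [Module ℂ A] {br : A →ₗ[ℂ] A →ₗ[ℂ] A}
  {L : ℤ → A} {T : Fin 3 → ℤ → A} {one : A} {c : ℂ}

/-- The paper's `lH`; the indices `0, +, −` of `Tᵃ` are encoded as `0, 1, 2`. -/
noncomputable def hamiltonian (Δ : ℂ) (L : ℤ → A) (T : Fin 3 → ℤ → A) : A :=
  L 0 + (1 / 2 : ℂ) • T 1 0 - (2 * Δ) • T 2 0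

/-- The paper's `K⁺ₘ`. -/
noncomputable def secondaryConstraint (Δ : ℂ) (T : Fin 3 → ℤ → A) (m : ℤ) : A :=
  (1 / 2 : ℂ) • T 1 m + (2 * Δ) • T 2 m

lemma br_T1_T2_of_eq_zero_or_eq_zero
    (hT12 : ∀ m n : ℤ, br (T 1 m) (T 2 n) =
      (2 : ℂ) • T 0 (m + n) + (if m + n = 0 then -(c * (m : ℂ)) else 0) • one)
    {m n : ℤ} (h : m = 0 ∨ n = 0) :
    br (T 1 m) (T 2 n) = (2 : ℂ) • T 0 (m + n) := by
  rw [hT12, ite_add_eq_zero_neg_mul_eq_zero c h, zero_smul, add_zero]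

lemma br_T0_hamiltonian (Δ : ℂ)
    (hTL : ∀ (a : Fin 3) (m n : ℤ), br (T a m) (L n) = (-(I * (m : ℂ))) • T a (m + n))
    (hT01 : ∀ m n : ℤ, br (T 0 m) (T 1 n) = -T 1 (m + n))
    (hT02 : ∀ m n : ℤ, br (T 0 m) (T 2 n) = T 2 (m + n)) (m : ℤ) :
    br (T 0 m) (hamiltonian Δ L T) =
      (-(I * (m : ℂ))) • T 0 m - secondaryConstraint Δ T m := by
  simp only [hamiltonian, secondaryConstraint, map_add, map_sub, map_smul, hTL, hT01, hT02,
    add_zero]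
  module

lemma br_secondaryConstraint_hamiltonian (Δ : ℂ) (hanti : ∀ x y, br x y = -br y x)
    (hTL : ∀ (a : Fin 3) (m n : ℤ), br (T a m) (L n) = (-(I * (m : ℂ))) • T a (m + n))
    (hT12 : ∀ m n : ℤ, br (T 1 m) (T 2 n) =
      (2 : ℂ) • T 0 (m + n) + (if m + n = 0 then -(c * (m : ℂ)) else 0) • one)
    (hT11 : ∀ m n : ℤ, br (T 1 m) (T 1 n) = 0)
    (hT22 : ∀ m n : ℤ, br (T 2 m) (T 2 n) = 0) (m : ℤ) :
    br (secondaryConstraint Δ T m) (hamiltonian Δ L T) =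
      (-(I * (m : ℂ))) • secondaryConstraint Δ T m - (4 * Δ) • T 0 m := by
  have hT1T2zero : br (T 1 m) (T 2 0) = (2 : ℂ) • T 0 m := by
    simpa using br_T1_T2_of_eq_zero_or_eq_zero hT12 (m := m) (n := 0) (.inr rfl)
  have hT2T1zero : br (T 2 m) (T 1 0) = -((2 : ℂ) • T 0 m) := by
    rw [hanti, br_T1_T2_of_eq_zero_or_eq_zero hT12 (.inl rfl), zero_add]
  simp only [hamiltonian, secondaryConstraint, map_add, map_sub, map_smul, LinearMap.add_apply,
    LinearMap.smul_apply, hTL, hT11, hT22, hT1T2zero, hT2T1zero, add_zero]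
  module

end ConstraintAlgebra

theorem stmt12_general (A : Type*) [AddCommGroup A] [Module ℂ A]
    (br : A →ₗ[ℂ] A →ₗ[ℂ] A) (l G Δ : ℝ)
    (L : ℤ → A) (T : Fin 3 → ℤ → A) (one : A)
    (hanti : ∀ x y, br x y = -br y x)
    (hTL : ∀ (a : Fin 3) (m n : ℤ), br (T a m) (L n) = (-(Complex.I * (m : ℂ))) • T a (m + n))
    (hT01 : ∀ m n : ℤ, br (T 0 m) (T 1 n) = -T 1 (m + n))
    (hT02 : ∀ m n : ℤ, br (T 0 m) (T 2 n) = T 2 (m + n))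
    (hT12 : ∀ m n : ℤ, br (T 1 m) (T 2 n) = (2 : ℂ) • T 0 (m + n)
      + (if m + n = 0 then -(Complex.I * ((l : ℂ) / (4 * (G : ℂ))) * (m : ℂ)) else 0) • one)
    (hT11 : ∀ m n : ℤ, br (T 1 m) (T 1 n) = 0)
    (hT22 : ∀ m n : ℤ, br (T 2 m) (T 2 n) = 0) :
    let lH : A := L 0 + (1 / 2 : ℂ) • T 1 0 - (2 * (Δ : ℂ)) • T 2 0
    let Kp : ℤ → A := fun m => (1 / 2 : ℂ) • T 1 m + (2 * (Δ : ℂ)) • T 2 m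
    (∀ m : ℤ, br (T 0 m) lH = (-(Complex.I * (m : ℂ))) • T 0 m - Kp m) ∧
    (∀ m : ℤ, br (Kp m) lH = (-(Complex.I * (m : ℂ))) • Kp m - (4 * (Δ : ℂ)) • T 0 m) ∧
    (∀ m : ℤ, br (Kp m) lH ∈ Submodule.span ℂ (Set.range (T 0) ∪ Set.range Kp)) := by
  intro lH Kp
  have hKp : ∀ m : ℤ, br (Kp m) lH = (-(I * (m : ℂ))) • Kp m - (4 * (Δ : ℂ)) • T 0 m :=
    br_secondaryConstraint_hamiltonian _ hanti hTL hT12 hT11 hT22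
  refine ⟨br_T0_hamiltonian _ hTL hT01 hT02, hKp, fun m => ?_⟩
  rw [hKp m]
  exact sub_mem (smul_mem _ _ (subset_span (.inr ⟨m, rfl⟩)))
    (smul_mem _ _ (subset_span (.inl ⟨m, rfl⟩)))

/-- In the Poisson algebra of modes with `i{T⁰ₘ,T⁺ₙ} = −iT⁺_{m+n}`,
`i{T⁰ₘ,T⁻ₙ} = iT⁻_{m+n}`, `i{T⁺ₘ,T⁻ₙ} = 2iT⁰_{m+n} + (l/(4G))mδ_{m+n,0}`,
`i{T⁰ₘ,T⁰ₙ} = −(l/(8G))mδ_{m+n,0}`, `i{Lₘ,Tᵃₙ} = −nTᵃ_{m+n}` (indices `0,+,− = 0,1,2`;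
scalars represented by `one`), and Hamiltonian `lH = L₀ + ½T⁺₀ − 2ΔT⁻₀`:
the bracket of the primary constraint `T⁰ₘ` with `lH` equals
`−imT⁰ₘ − ½T⁺ₘ − 2ΔT⁻ₘ = −imT⁰ₘ − K⁺ₘ` (so the secondary constraint is
`K⁺ₘ := ½T⁺ₘ + 2ΔT⁻ₘ ≈ 0`); moreover `{K⁺ₘ, lH} = −imK⁺ₘ − 4ΔT⁰ₘ`, which lies in the
span of the constraints `{T⁰ₙ, K⁺ₙ}`, i.e. vanishes on the constraint surface, so the
constraint set is complete. -/
theorem stmt12 (A : Type*) [AddCommGroup A] [Module ℂ A]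
    (br : A →ₗ[ℂ] A →ₗ[ℂ] A) (l G Δ : ℝ) (hl : 0 < l) (hG : 0 < G)
    (L : ℤ → A) (T : Fin 3 → ℤ → A) (one : A)
    (hanti : ∀ x y, br x y = -br y x)
    (hone : ∀ x, br x one = 0)
    (hTL : ∀ (a : Fin 3) (m n : ℤ), br (T a m) (L n) = (-(Complex.I * (m : ℂ))) • T a (m + n))
    (hT00 : ∀ m n : ℤ, br (T 0 m) (T 0 n) =
      (if m + n = 0 then Complex.I * ((l : ℂ) / (8 * (G : ℂ))) * (m : ℂ) else 0) • one)
    (hT01 : ∀ m n : ℤ, br (T 0 m) (T 1 n) = -T 1 (m + n))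
    (hT02 : ∀ m n : ℤ, br (T 0 m) (T 2 n) = T 2 (m + n))
    (hT12 : ∀ m n : ℤ, br (T 1 m) (T 2 n) = (2 : ℂ) • T 0 (m + n)
      + (if m + n = 0 then -(Complex.I * ((l : ℂ) / (4 * (G : ℂ))) * (m : ℂ)) else 0) • one)
    (hT11 : ∀ m n : ℤ, br (T 1 m) (T 1 n) = 0)
    (hT22 : ∀ m n : ℤ, br (T 2 m) (T 2 n) = 0) :
    let lH : A := L 0 + (1 / 2 : ℂ) • T 1 0 - (2 * (Δ : ℂ)) • T 2 0
    let Kp : ℤ → A := fun m => (1 / 2 : ℂ) • T 1 m + (2 * (Δ : ℂ)) • T 2 m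
    (∀ m : ℤ, br (T 0 m) lH = (-(Complex.I * (m : ℂ))) • T 0 m - Kp m) ∧
    (∀ m : ℤ, br (Kp m) lH = (-(Complex.I * (m : ℂ))) • Kp m - (4 * (Δ : ℂ)) • T 0 m) ∧
    (∀ m : ℤ, br (Kp m) lH ∈ Submodule.span ℂ (Set.range (T 0) ∪ Set.range Kp)) :=
  stmt12_general A br l G Δ L T one hanti hTL hT01 hT02 hT12 hT11 hT22
end

section
/- In the setting of the preceding constrained system with Δ ≠ 0, the quantities K⁻ₘ := ½T⁺ₘ − 2ΔT⁻ₘ Poisson-commute with all constraints on the constraint surface: {K⁻ₘ, T⁰ₙ} ≈ 0 and {K⁻ₘ, K⁺ₙ} ≈ 0, and satisfy i{K⁻ₘ, K⁻ₙ} = −(Δl/(2G))mδ_{m+n,0} on the constraint surface. -/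
/-!
Write `K⁺ = ½T⁺ + 2ΔT⁻` and `K⁻ = ½T⁺ − 2ΔT⁻` as combinations `aT⁺ + bT⁻`. By bilinearity and
antisymmetry, the bracket of `aT⁺ₘ + bT⁻ₘ` with `cT⁺ₙ + dT⁻ₙ` is `2(ad − bc)T⁰ₘ₊ₙ` plus the central
term `(ad + bc)κm δ_{m+n,0}`, the two central contributions adding up because the central charge is
odd in `m` on `m + n = 0`. For `{K⁻, K⁺}` the central part cancels (`ad + bc = 0`), for `{K⁻, K⁻}`
the `T⁰` part does (`ad − bc = 0`), and `{K⁻ₘ, T⁰ₙ} = K⁺ₘ₊ₙ`.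
-/

section CurrentAlgebra

variable {A : Type*} [AddCommGroup A] [Module ℂ A] (br : A →ₗ[ℂ] A →ₗ[ℂ] A)
  (T : Fin 3 → ℤ → A) (one : A) (κ : ℂ)

theorem br_smul_add_smul_T0 (hanti : ∀ x y, br x y = -br y x)
    (hT01 : ∀ m n : ℤ, br (T 0 m) (T 1 n) = -T 1 (m + n))
    (hT02 : ∀ m n : ℤ, br (T 0 m) (T 2 n) = T 2 (m + n)) (a b : ℂ) (m n : ℤ) :
    br (a • T 1 m + b • T 2 m) (T 0 n) = a • T 1 (m + n) + (-b) • T 2 (m + n) := by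
  rw [hanti, map_add, map_smul, map_smul, hT01, hT02, add_comm n m]
  module

theorem br_smul_add_smul (hanti : ∀ x y, br x y = -br y x)
    (hT12 : ∀ m n : ℤ, br (T 1 m) (T 2 n) =
      (2 : ℂ) • T 0 (m + n) + (if m + n = 0 then κ * m else 0) • one)
    (hT11 : ∀ m n : ℤ, br (T 1 m) (T 1 n) = 0)
    (hT22 : ∀ m n : ℤ, br (T 2 m) (T 2 n) = 0) (a b c d : ℂ) (m n : ℤ) :
    br (a • T 1 m + b • T 2 m) (c • T 1 n + d • T 2 n) =
      (2 * (a * d - b * c)) • T 0 (m + n)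
        + (if m + n = 0 then (a * d + b * c) * κ * m else 0) • one := by
  simp only [map_add, map_smul, LinearMap.add_apply, LinearMap.smul_apply, hT11, hT22]
  rw [hanti (T 2 m), hT12, hT12, add_comm n m]
  split_ifs with h
  · have hn : (n : ℂ) = -m := by exact_mod_cast (eq_neg_of_add_eq_zero_right h)
    rw [hn]
    module
  · module

end CurrentAlgebra

theorem stmt13_general (A : Type*) [AddCommGroup A] [Module ℂ A]
    (br : A →ₗ[ℂ] A →ₗ[ℂ] A) (l G Δ : ℝ)
    (T : Fin 3 → ℤ → A) (one : A)
    (hanti : ∀ x y, br x y = -br y x)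
    (hT01 : ∀ m n : ℤ, br (T 0 m) (T 1 n) = -T 1 (m + n))
    (hT02 : ∀ m n : ℤ, br (T 0 m) (T 2 n) = T 2 (m + n))
    (hT12 : ∀ m n : ℤ, br (T 1 m) (T 2 n) = (2 : ℂ) • T 0 (m + n)
      + (if m + n = 0 then -(Complex.I * ((l : ℂ) / (4 * (G : ℂ))) * (m : ℂ)) else 0) • one)
    (hT11 : ∀ m n : ℤ, br (T 1 m) (T 1 n) = 0)
    (hT22 : ∀ m n : ℤ, br (T 2 m) (T 2 n) = 0) :
    let Kp : ℤ → A := fun m => (1 / 2 : ℂ) • T 1 m + (2 * (Δ : ℂ)) • T 2 m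
    let Km : ℤ → A := fun m => (1 / 2 : ℂ) • T 1 m - (2 * (Δ : ℂ)) • T 2 m
    let S : Submodule ℂ A := Submodule.span ℂ (Set.range (T 0) ∪ Set.range Kp)
    (∀ m n : ℤ, br (Km m) (T 0 n) ∈ S) ∧
    (∀ m n : ℤ, br (Km m) (Kp n) ∈ S) ∧
    (∀ m n : ℤ, br (Km m) (Km n)
      - (if m + n = 0 then Complex.I * ((Δ : ℂ) * (l : ℂ) / (2 * (G : ℂ))) * (m : ℂ) else 0) • one
      ∈ S) := by
  intro Kp Km S
  have hT0S (k : ℤ) : T 0 k ∈ S := Submodule.subset_span (Or.inl ⟨k, rfl⟩)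
  have hKm (k : ℤ) : Km k = (1 / 2 : ℂ) • T 1 k + (-(2 * Δ) : ℂ) • T 2 k := by
    simp only [Km, sub_eq_add_neg, neg_smul]
  have hbrComb := br_smul_add_smul br T one (-(Complex.I * ((l : ℂ) / (4 * (G : ℂ))))) hanti
    (by simpa only [neg_mul] using hT12) hT11 hT22
  refine ⟨fun m n => ?_, fun m n => ?_, fun m n => ?_⟩
  · rw [hKm, br_smul_add_smul_T0 br T hanti hT01 hT02, neg_neg]
    exact Submodule.subset_span (Or.inr ⟨m + n, rfl⟩)
  · rw [hKm, hbrComb, show (1 / 2 : ℂ) * (2 * Δ) + -(2 * Δ) * (1 / 2) = 0 by ring]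
    simpa using S.smul_mem _ (hT0S (m + n))
  · have hKmKm : br (Km m) (Km n) = (if m + n = 0
        then Complex.I * ((Δ : ℂ) * (l : ℂ) / (2 * (G : ℂ))) * (m : ℂ) else 0) • one := by
      rw [hKm, hKm, hbrComb]
      split_ifs <;> module
    rw [hKmKm, sub_self]
    exact S.zero_mem

/-- In the constrained Virasoro–sl(2,ℝ) current algebra system with `Δ ≠ 0`
(brackets `i{T⁰ₘ,T±ₙ} = ∓iT±_{m+n}`, `i{T⁺ₘ,T⁻ₙ} = 2iT⁰_{m+n} + (l/(4G))mδ_{m+n,0}`,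
`i{T⁰ₘ,T⁰ₙ} = −(l/(8G))mδ_{m+n,0}`, `i{T±ₘ,T±ₙ} = 0`; constraints `T⁰ₘ ≈ 0` and
`K⁺ₘ = ½T⁺ₘ + 2ΔT⁻ₘ ≈ 0`; `≈` meaning modulo the span of the constraints),
the quantities `K⁻ₘ := ½T⁺ₘ − 2ΔT⁻ₘ` Poisson-commute with all constraints on the
constraint surface, `{K⁻ₘ,T⁰ₙ} ≈ 0` and `{K⁻ₘ,K⁺ₙ} ≈ 0`, and satisfy
`i{K⁻ₘ,K⁻ₙ} = −(Δl/(2G))mδ_{m+n,0}` on the constraint surface. -/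
theorem stmt13 (A : Type*) [AddCommGroup A] [Module ℂ A]
    (br : A →ₗ[ℂ] A →ₗ[ℂ] A) (l G Δ : ℝ) (hl : 0 < l) (hG : 0 < G) (hΔ : Δ ≠ 0)
    (T : Fin 3 → ℤ → A) (one : A)
    (hanti : ∀ x y, br x y = -br y x)
    (hT00 : ∀ m n : ℤ, br (T 0 m) (T 0 n) =
      (if m + n = 0 then Complex.I * ((l : ℂ) / (8 * (G : ℂ))) * (m : ℂ) else 0) • one)
    (hT01 : ∀ m n : ℤ, br (T 0 m) (T 1 n) = -T 1 (m + n))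
    (hT02 : ∀ m n : ℤ, br (T 0 m) (T 2 n) = T 2 (m + n))
    (hT12 : ∀ m n : ℤ, br (T 1 m) (T 2 n) = (2 : ℂ) • T 0 (m + n)
      + (if m + n = 0 then -(Complex.I * ((l : ℂ) / (4 * (G : ℂ))) * (m : ℂ)) else 0) • one)
    (hT11 : ∀ m n : ℤ, br (T 1 m) (T 1 n) = 0)
    (hT22 : ∀ m n : ℤ, br (T 2 m) (T 2 n) = 0) :
    let Kp : ℤ → A := fun m => (1 / 2 : ℂ) • T 1 m + (2 * (Δ : ℂ)) • T 2 m
    let Km : ℤ → A := fun m => (1 / 2 : ℂ) • T 1 m - (2 * (Δ : ℂ)) • T 2 m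
    let S : Submodule ℂ A := Submodule.span ℂ (Set.range (T 0) ∪ Set.range Kp)
    (∀ m n : ℤ, br (Km m) (T 0 n) ∈ S) ∧
    (∀ m n : ℤ, br (Km m) (Kp n) ∈ S) ∧
    (∀ m n : ℤ, br (Km m) (Km n)
      - (if m + n = 0 then Complex.I * ((Δ : ℂ) * (l : ℂ) / (2 * (G : ℂ))) * (m : ℂ) else 0) • one
      ∈ S) :=
  stmt13_general A br l G Δ T one hanti hT01 hT02 hT12 hT11 hT22
end
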